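/- Let G: ℝ² → ℝ satisfy |G(u,v) − G(u₀,v)| ≤ L|u − u₀| for all u,u₀,v and |G(u,v)| ≥ c√(u² + v²) for some L ≥ c > 0. Let g(x,ξ) = G(f(x), h(x_{∼i},ξ)) ∈ L²((0,1)^{n+m}) with mean zero, where f ∈ L²((0,1)ⁿ), h ∈ L²((0,1)^{n+m−1}) (h independent of x_i). Then S^g_{T,x_i} ≤ 2(L²/c²)·(Var(f)/(Var(f)+Var(h)))·S^f_{T,x_i}. -/

import Mathlib

open MeasureTheory

noncomputable section SobolDefs

/-- Uniform probability measure on the open unit cube `(0,1)^n`. -/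
def uCube (n : ℕ) : Measure (Fin n → ℝ) :=
  Measure.pi fun _ => volume.restrict (Set.Ioo 0 1)

/-- Mean value of `f`. -/
def mval {α : Type*} [MeasurableSpace α] (μ : Measure α) (f : α → ℝ) : ℝ := ∫ x, f x ∂μ

/-- Integral of the square of `f`. -/
def intSq {α : Type*} [MeasurableSpace α] (μ : Measure α) (f : α → ℝ) : ℝ := ∫ x, (f x) ^ 2 ∂μ

/-- Variance of `f`. -/
def var' {α : Type*} [MeasurableSpace α] (μ : Measure α) (f : α → ℝ) : ℝ := intSq μ f - (mval μ f) ^ 2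

/-- Covariance of `f` and `h`. -/
def cov' {α : Type*} [MeasurableSpace α] (μ : Measure α) (f h : α → ℝ) : ℝ :=
  (∫ x, f x * h x ∂μ) - mval μ f * mval μ h

/-- Conditional mean of `f` obtained by integrating out the coordinate encoded
by the update map `upd` over `(0,1)`. -/
def cMean {α : Type*} [MeasurableSpace α] (upd : α → ℝ → α) (f : α → ℝ) (x : α) : ℝ :=
  ∫ t in Set.Ioo (0 : ℝ) 1, f (upd x t)

/-- Total-effect variance of the coordinate encoded by `upd`. -/
def tVar {α : Type*} [MeasurableSpace α] (μ : Measure α) (upd : α → ℝ → α) (f : α → ℝ) : ℝ :=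
  intSq μ f - ∫ x, (cMean upd f x) ^ 2 ∂μ

/-- Total Sobol sensitivity index of the coordinate encoded by `upd`. -/
def sobolT {α : Type*} [MeasurableSpace α] (μ : Measure α) (upd : α → ℝ → α) (f : α → ℝ) : ℝ :=
  tVar μ upd f / var' μ f

/-- Updating the `i`-th coordinate of a point of the cube. -/
def updC {n : ℕ} (i : Fin n) : (Fin n → ℝ) → ℝ → (Fin n → ℝ) :=
  fun x t => Function.update x i t

/-- Updating the `i`-th coordinate of the first component of a product point. -/
def updF {n : ℕ} {β : Type*} (i : Fin n) : ((Fin n → ℝ) × β) → ℝ → ((Fin n → ℝ) × β) :=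
  fun p t => (Function.update p.1 i t, p.2)

end SobolDefs

/-! Along each line in the direction `x_i`, the variance of a function is half the mean of
`(φ t - φ s)²` over independent `t, s`. Since `h` does not depend on `x_i`, the Lipschitz bound on
`G` controls these differences for `g` by `L` times those for `f`, so the total-effect variances
satisfy `tVar g ≤ L² tVar f`. On the other side, coercivity and `∫ g = 0` give
`Var g = ∫ g² ≥ c² (∫ f² + ∫ h²) ≥ c² (Var f + Var h)`. -/

open ProbabilityTheory

local notation "η" => volume.restrict (Set.Ioo (0:ℝ) 1)

instance : IsProbabilityMeasure η := ⟨by simp⟩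

instance (n : ℕ) : IsProbabilityMeasure (uCube n) := by
  unfold uCube
  infer_instance

section TwoPoint

variable {Ω : Type*} [MeasurableSpace Ω] {ν : Measure Ω} [IsProbabilityMeasure ν]

lemma integral_sub_sq_prod_self {φ : Ω → ℝ} (hφ : MemLp φ 2 ν) :
    ∫ z, (φ z.1 - φ z.2) ^ 2 ∂(ν.prod ν) = 2 * Var[φ; ν] := by
  have hint : Integrable φ ν := hφ.integrable one_le_two
  have hmean : ∫ z, (φ z.1 - φ z.2) ∂(ν.prod ν) = 0 := by
    rw [integral_sub (hint.comp_fst ν) (hint.comp_snd ν), integral_fun_fst, integral_fun_snd]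
    simp
  have hvar := variance_add_prod hφ hφ.neg
  rw [variance_neg] at hvar
  simp only [Pi.neg_apply, ← sub_eq_add_neg] at hvar
  rw [← variance_of_integral_eq_zero (by fun_prop) hmean, hvar, two_mul]

lemma variance_le_sq_mul_variance_of_abs_sub_le {φ ψ : Ω → ℝ} {L : ℝ}
    (hφ : MemLp φ 2 ν) (hψ : MemLp ψ 2 ν) (h : ∀ t s, |φ t - φ s| ≤ L * |ψ t - ψ s|) :
    Var[φ; ν] ≤ L ^ 2 * Var[ψ; ν] := by
  have hψ' : Integrable (fun z : Ω × Ω => (ψ z.1 - ψ z.2) ^ 2) (ν.prod ν) :=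
    ((hψ.comp_fst ν).sub (hψ.comp_snd ν)).integrable_sq
  have hmono : ∫ z, (φ z.1 - φ z.2) ^ 2 ∂(ν.prod ν)
      ≤ ∫ z, L ^ 2 * (ψ z.1 - ψ z.2) ^ 2 ∂(ν.prod ν) :=
    integral_mono_of_nonneg (ae_of_all _ fun _ => sq_nonneg _) (hψ'.const_mul _)
      (ae_of_all _ fun z => by
        simpa only [sq_abs, mul_pow] using pow_le_pow_left₀ (abs_nonneg _) (h z.1 z.2) 2)
  rw [integral_const_mul, integral_sub_sq_prod_self hφ, integral_sub_sq_prod_self hψ] at hmono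
  linarith

end TwoPoint

lemma MeasureTheory.MeasurePreserving.integral_comp_of_aestronglyMeasurable {α β : Type*}
    [MeasurableSpace α] [MeasurableSpace β] {μ : Measure α} {ν : Measure β} {T : α → β}
    (hT : MeasurePreserving T μ ν) {g : β → ℝ} (hg : AEStronglyMeasurable g ν) :
    ∫ x, g (T x) ∂μ = ∫ y, g y ∂ν := by
  rw [← hT.map_eq] at hg ⊢
  exact (integral_map hT.aemeasurable hg).symm

section Slices

variable {α : Type*} [MeasurableSpace α] {μ : Measure α} [IsProbabilityMeasure μ]
  {upd : α → ℝ → α}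
  (hupd : MeasurePreserving (fun q : α × ℝ => upd q.1 q.2) (μ.prod η) μ)
  {f : α → ℝ} (hf : MemLp f 2 μ)
include hupd hf

lemma ae_memLp_slice : ∀ᵐ x ∂μ, MemLp (fun t => f (upd x t)) 2 η := by
  have hF := hf.comp_measurePreserving hupd
  filter_upwards [(hF.integrable one_le_two).prod_right_ae, hF.integrable_sq.prod_right_ae]
    with x hx hx2
  exact (memLp_two_iff_integrable_sq hx.aestronglyMeasurable).2 hx2

lemma integrable_cMean_sq : Integrable (fun x => cMean upd f x ^ 2) μ := by
  have hF := hf.comp_measurePreserving hupd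
  refine hF.integrable_sq.integral_prod_left.mono'
    ((hF.integrable one_le_two).integral_prod_left.aestronglyMeasurable.pow 2) ?_
  filter_upwards [ae_memLp_slice hupd hf] with x hx
  rw [Real.norm_eq_abs, abs_of_nonneg (sq_nonneg _), ← sub_nonneg]
  exact (variance_eq_sub hx).symm ▸ variance_nonneg _ _

lemma variance_slice_ae_eq : (fun x => Var[fun t => f (upd x t); η])
    =ᵐ[μ] fun x => ∫ t, f (upd x t) ^ 2 ∂η - cMean upd f x ^ 2 := by
  filter_upwards [ae_memLp_slice hupd hf] with x hx
  exact variance_eq_sub hx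

lemma integrable_variance_slice : Integrable (fun x => Var[fun t => f (upd x t); η]) μ :=
  ((hf.comp_measurePreserving hupd).integrable_sq.integral_prod_left.sub
    (integrable_cMean_sq hupd hf)).congr (variance_slice_ae_eq hupd hf).symm

lemma tVar_eq_integral_variance_slice :
    tVar μ upd f = ∫ x, Var[fun t => f (upd x t); η] ∂μ := by
  have hF : Integrable (fun q : α × ℝ => f (upd q.1 q.2) ^ 2) (μ.prod η) :=
    (hf.comp_measurePreserving hupd).integrable_sq
  have hsq : intSq μ f = ∫ q, f (upd q.1 q.2) ^ 2 ∂(μ.prod η) :=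
    (hupd.integral_comp_of_aestronglyMeasurable (g := fun y => f y ^ 2)
      hf.integrable_sq.aestronglyMeasurable).symm
  rw [tVar, hsq, integral_prod _ hF, ← integral_sub hF.integral_prod_left
    (integrable_cMean_sq hupd hf)]
  exact integral_congr_ae (variance_slice_ae_eq hupd hf).symm

lemma tVar_nonneg : 0 ≤ tVar μ upd f :=
  tVar_eq_integral_variance_slice hupd hf ▸ integral_nonneg fun _ => variance_nonneg _ _

lemma tVar_le_sq_mul_tVar {g : α → ℝ} (hg : MemLp g 2 μ) {L : ℝ}
    (hLip : ∀ x t s, |g (upd x t) - g (upd x s)| ≤ L * |f (upd x t) - f (upd x s)|) :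
    tVar μ upd g ≤ L ^ 2 * tVar μ upd f := by
  rw [tVar_eq_integral_variance_slice hupd hg, tVar_eq_integral_variance_slice hupd hf,
    ← integral_const_mul]
  refine integral_mono_of_nonneg (ae_of_all _ fun _ => variance_nonneg _ _)
    ((integrable_variance_slice hupd hf).const_mul _) ?_
  filter_upwards [ae_memLp_slice hupd hg, ae_memLp_slice hupd hf] with x hgx hfx
  exact variance_le_sq_mul_variance_of_abs_sub_le hgx hfx (hLip x)

end Slices

section Variance

variable {α : Type*} [MeasurableSpace α] {μ : Measure α}

lemma var'_eq_variance [IsProbabilityMeasure μ] {f : α → ℝ} (hf : MemLp f 2 μ) :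
    var' μ f = Var[f; μ] :=
  (variance_eq_sub hf).symm

lemma var'_le_intSq (f : α → ℝ) : var' μ f ≤ intSq μ f :=
  sub_le_self _ (sq_nonneg _)

lemma var'_comp_fst [SFinite μ] {β : Type*} [MeasurableSpace β] (ν : Measure β)
    [IsProbabilityMeasure ν] (f : α → ℝ) : var' (μ.prod ν) (fun p => f p.1) = var' μ f := by
  simp only [var', intSq, mval]
  rw [integral_fun_fst (fun x => f x ^ 2), integral_fun_fst f]
  simp

lemma sq_mul_add_sq_le_sq {G : ℝ → ℝ → ℝ} {c : ℝ} (hc : 0 ≤ c)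
    (hcoer : ∀ u v : ℝ, c * Real.sqrt (u ^ 2 + v ^ 2) ≤ |G u v|) (u v : ℝ) :
    c ^ 2 * (u ^ 2 + v ^ 2) ≤ G u v ^ 2 := by
  simpa only [mul_pow, Real.sq_sqrt (by positivity : 0 ≤ u ^ 2 + v ^ 2), sq_abs] using
    pow_le_pow_left₀ (by positivity) (hcoer u v) 2

lemma sq_mul_intSq_add_le_intSq {G : ℝ → ℝ → ℝ} {c : ℝ} (hc : 0 ≤ c)
    (hcoer : ∀ u v : ℝ, c * Real.sqrt (u ^ 2 + v ^ 2) ≤ |G u v|) {F₁ F₂ : α → ℝ}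
    (h₁ : MemLp F₁ 2 μ) (h₂ : MemLp F₂ 2 μ)
    (hG : MemLp (fun x => G (F₁ x) (F₂ x)) 2 μ) :
    c ^ 2 * (intSq μ F₁ + intSq μ F₂) ≤ intSq μ fun x => G (F₁ x) (F₂ x) := by
  rw [intSq, intSq, intSq, ← integral_add h₁.integrable_sq h₂.integrable_sq,
    ← integral_const_mul]
  exact integral_mono ((h₁.integrable_sq.add h₂.integrable_sq).const_mul _) hG.integrable_sq
    fun x => sq_mul_add_sq_le_sq hc hcoer _ _

end Variance

lemma measurePreserving_update {ι : Type*} [Fintype ι] [DecidableEq ι] {X : ι → Type*}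
    [∀ j, MeasurableSpace (X j)] (μ : ∀ j, Measure (X j)) [∀ j, SigmaFinite (μ j)] (i : ι)
    [IsProbabilityMeasure (μ i)] :
    MeasurePreserving (fun q : (∀ j, X j) × X i => Function.update q.1 i q.2)
      ((Measure.pi μ).prod (μ i)) (Measure.pi μ) := by
  refine ⟨measurable_update', (Measure.pi_eq fun s hs => ?_).symm⟩
  have hpre : (fun q : (∀ j, X j) × X i => Function.update q.1 i q.2) ⁻¹' Set.univ.pi s
      = Set.univ.pi (Function.update s i Set.univ) ×ˢ s i := by
    ext ⟨x, t⟩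
    simp only [Set.mem_preimage, Set.mem_univ_pi, Set.mem_prod]
    refine ⟨fun hx => ⟨fun j => ?_, by simpa using hx i⟩, fun ⟨hx, ht⟩ j => ?_⟩
    · rcases eq_or_ne j i with rfl | hj
      · simp
      · simpa [hj] using hx j
    · rcases eq_or_ne j i with rfl | hj
      · simpa using ht
      · simpa [hj] using hx j
  rw [Measure.map_apply measurable_update' (.univ_pi hs), hpre, Measure.prod_prod,
    Measure.pi_pi, ← Finset.prod_erase_mul _ _ (Finset.mem_univ i),
    ← Finset.prod_erase_mul _ _ (Finset.mem_univ i)]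
  simp only [Function.update_self, measure_univ, mul_one]
  congr 1
  exact Finset.prod_congr rfl fun j hj => by rw [Function.update_of_ne (Finset.ne_of_mem_erase hj)]

lemma MeasureTheory.MeasurePreserving.mapFst_prod {α β γ : Type*} [MeasurableSpace α]
    [MeasurableSpace β] [MeasurableSpace γ] {μ : Measure α} {ν : Measure β} {κ : Measure γ}
    [SFinite μ] [SFinite ν] [SFinite κ] {T : α × γ → α}
    (hT : MeasurePreserving T (μ.prod κ) μ) :
    MeasurePreserving (fun q : (α × β) × γ => (T (q.1.1, q.2), q.1.2)) ((μ.prod ν).prod κ)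
      (μ.prod ν) :=
  ((hT.prod (.id ν)).comp ((measurePreserving_prodAssoc μ κ ν).symm
      (MeasurableEquiv.prodAssoc))).comp
    (((MeasurePreserving.id μ).prod (Measure.measurePreserving_swap)).comp
      (measurePreserving_prodAssoc μ ν κ))

section Cube

variable {n : ℕ} (i : Fin n)

lemma measurePreserving_updC :
    MeasurePreserving (fun q => updC i q.1 q.2) ((uCube n).prod η) (uCube n) :=
  measurePreserving_update (fun _ => η) i

lemma measurePreserving_updF {β : Type*} [MeasurableSpace β] (ν : Measure β)
    [IsProbabilityMeasure ν] :
    MeasurePreserving (fun q => updF i q.1 q.2) (((uCube n).prod ν).prod η) ((uCube n).prod ν) :=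
  (measurePreserving_updC i).mapFst_prod

lemma tVar_updF_comp_fst {β : Type*} [MeasurableSpace β] (ν : Measure β)
    [IsProbabilityMeasure ν] (f : (Fin n → ℝ) → ℝ) :
    tVar ((uCube n).prod ν) (updF i) (fun p => f p.1) = tVar (uCube n) (updC i) f := by
  change ∫ p : _ × β, f p.1 ^ 2 ∂_ - ∫ p : _ × β, cMean (updC i) f p.1 ^ 2 ∂_ = _
  rw [integral_fun_fst (fun x => f x ^ 2), integral_fun_fst (fun x => cMean (updC i) f x ^ 2)]
  simp [tVar, intSq]

end Cube

theorem stmt11_general {n m : ℕ} (i : Fin n) (G : ℝ → ℝ → ℝ) (L c : ℝ)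
    (hc : 0 < c)
    (hLip : ∀ u u₀ v : ℝ, |G u v - G u₀ v| ≤ L * |u - u₀|)
    (hcoer : ∀ u v : ℝ, c * Real.sqrt (u ^ 2 + v ^ 2) ≤ |G u v|)
    (f : (Fin n → ℝ) → ℝ) (h : (Fin n → ℝ) × (Fin m → ℝ) → ℝ)
    (hf : MemLp f 2 (uCube n)) (hh : MemLp h 2 ((uCube n).prod (uCube m)))
    (hind : ∀ (x : Fin n → ℝ) (t : ℝ) (ξ : Fin m → ℝ),
      h (Function.update x i t, ξ) = h (x, ξ))
    (hg : MemLp (fun p : (Fin n → ℝ) × (Fin m → ℝ) => G (f p.1) (h p)) 2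
      ((uCube n).prod (uCube m)))
    (hmean : mval ((uCube n).prod (uCube m)) (fun p => G (f p.1) (h p)) = 0)
    (hvf : 0 < var' (uCube n) f) :
    sobolT ((uCube n).prod (uCube m)) (updF i) (fun p => G (f p.1) (h p)) ≤
      2 * (L ^ 2 / c ^ 2) *
        (var' (uCube n) f /
          (var' (uCube n) f + var' ((uCube n).prod (uCube m)) h)) *
        sobolT (uCube n) (updC i) f := by
  set μ := (uCube n).prod (uCube m)
  have hfP : MemLp (fun p : (Fin n → ℝ) × (Fin m → ℝ) => f p.1) 2 μ := hf.comp_fst _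
  have hT : tVar μ (updF i) (fun p => G (f p.1) (h p)) ≤ L ^ 2 * tVar (uCube n) (updC i) f := by
    rw [← tVar_updF_comp_fst i (uCube m) f]
    refine tVar_le_sq_mul_tVar (measurePreserving_updF i _) hfP hg fun p t s => ?_
    simp only [updF, hind]
    exact hLip _ _ _
  have hV : c ^ 2 * (var' (uCube n) f + var' μ h) ≤ var' μ fun p => G (f p.1) (h p) :=
    calc c ^ 2 * (var' (uCube n) f + var' μ h)
        ≤ c ^ 2 * (intSq μ (fun p => f p.1) + intSq μ h) := by
          rw [← var'_comp_fst (uCube m)]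
          gcongr <;> exact var'_le_intSq _
      _ ≤ intSq μ fun p => G (f p.1) (h p) := sq_mul_intSq_add_le_intSq hc.le hcoer hfP hh hg
      _ = var' μ fun p => G (f p.1) (h p) := by simp [var', hmean]
  have hVh : 0 ≤ var' μ h := var'_eq_variance hh ▸ variance_nonneg _ _
  have hT0 : 0 ≤ tVar (uCube n) (updC i) f := tVar_nonneg (measurePreserving_updC i) hf
  have hRatio : 0 ≤ L ^ 2 / c ^ 2 * (var' (uCube n) f / (var' (uCube n) f + var' μ h)) *
      (tVar (uCube n) (updC i) f / var' (uCube n) f) := by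
    positivity
  unfold sobolT
  calc _ ≤ L ^ 2 * tVar (uCube n) (updC i) f / (c ^ 2 * (var' (uCube n) f + var' μ h)) :=
        div_le_div₀ (by positivity) hT (by positivity) hV
    _ = L ^ 2 / c ^ 2 * (var' (uCube n) f / (var' (uCube n) f + var' μ h)) *
        (tVar (uCube n) (updC i) f / var' (uCube n) f) := by
      field_simp
    _ ≤ _ := by linarith

/-- General estimate (Theorem D1): if `G` is `L`-Lipschitz in its first argument
uniformly in the second and `c`-coercive, `g = G(f(x), h(x_{∼i},ξ))` has mean zero,
then `S^g_{T,x_i} ≤ 2(L²/c²)·(Var f/(Var f + Var h))·S^f_{T,x_i}`. -/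
theorem stmt11 {n m : ℕ} (i : Fin n) (G : ℝ → ℝ → ℝ) (L c : ℝ)
    (hc : 0 < c) (hLc : c ≤ L)
    (hLip : ∀ u u₀ v : ℝ, |G u v - G u₀ v| ≤ L * |u - u₀|)
    (hcoer : ∀ u v : ℝ, c * Real.sqrt (u ^ 2 + v ^ 2) ≤ |G u v|)
    (f : (Fin n → ℝ) → ℝ) (h : (Fin n → ℝ) × (Fin m → ℝ) → ℝ)
    (hf : MemLp f 2 (uCube n)) (hh : MemLp h 2 ((uCube n).prod (uCube m)))
    (hind : ∀ (x : Fin n → ℝ) (t : ℝ) (ξ : Fin m → ℝ),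
      h (Function.update x i t, ξ) = h (x, ξ))
    (hg : MemLp (fun p : (Fin n → ℝ) × (Fin m → ℝ) => G (f p.1) (h p)) 2
      ((uCube n).prod (uCube m)))
    (hmean : mval ((uCube n).prod (uCube m)) (fun p => G (f p.1) (h p)) = 0)
    (hvf : 0 < var' (uCube n) f)
    (hvg : 0 < var' ((uCube n).prod (uCube m)) fun p => G (f p.1) (h p)) :
    sobolT ((uCube n).prod (uCube m)) (updF i) (fun p => G (f p.1) (h p)) ≤
      2 * (L ^ 2 / c ^ 2) *
        (var' (uCube n) f /
          (var' (uCube n) f + var' ((uCube n).prod (uCube m)) h)) *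
        sobolT (uCube n) (updC i) f :=
  stmt11_general i G L c hc hLip hcoer f h hf hh hind hg hmean hvf
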